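/- arXiv:2506.06298 — 2 statements merged into one kernel-verified Lean document; each statement's English description precedes it below -/
import Mathlib

section
/- Suppose there exists an ε-pairwise-calibrated ensemble r (i.e., E[(p̂^r - p⋆)^2] ≤ ε where p̂^r is a weighted average of {0,1}-valued comparison functions). Then for every β ≥ 2, the total mixture weight of components θ_j whose disagreement score satisfies Φ(θ_j) > β·inf_θ Φ(θ) + (β+1)√ε is at most 1/(β-1). -/
open Finset

/-- First part of Theorem 3: if the ensemble `(α_j; θ_j)` is `ε`-pairwise
calibrated, then for every `β ≥ 2` the total weight of components whose
disagreement score exceeds `β·inf_θ Φ(θ) + (β+1)√ε` is at most `1/(β-1)`. -/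
theorem stmt_12 {Ω Θ : Type*} [Fintype Ω] [Nonempty Θ]
    (μ : Ω → ℝ) (hμ0 : ∀ ω, 0 ≤ μ ω) (hμ1 : ∑ ω, μ ω = 1)
    (pstar : Ω → ℝ) (hp0 : ∀ ω, 0 ≤ pstar ω) (hp1 : ∀ ω, pstar ω ≤ 1)
    (V : Θ → Ω → Bool)
    (Φ : Θ → ℝ)
    (hΦ : ∀ θ, Φ θ = ∑ ω, μ ω * |(if V θ ω then (1 : ℝ) else 0) - pstar ω|)
    (k : ℕ) (θs : Fin k → Θ) (α : Fin k → ℝ)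
    (hα0 : ∀ j, 0 ≤ α j) (hα1 : ∑ j, α j = 1)
    (ε : ℝ)
    (hcal : (∑ ω, μ ω *
        ((∑ j, α j * (if V (θs j) ω then (1 : ℝ) else 0)) - pstar ω) ^ 2) ≤ ε)
    (β : ℝ) (hβ : 2 ≤ β) :
    ∑ j ∈ univ.filter
        (fun j => Φ (θs j) > β * (⨅ θ' : Θ, Φ θ') + (β + 1) * Real.sqrt ε), α j
      ≤ 1 / (β - 1) := by
  set m := ⨅ θ' : Θ, Φ θ' with hm
  set s := Real.sqrt ε with hsdef
  have hΦ0 : ∀ θ, 0 ≤ Φ θ := by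
    intro θ; rw [hΦ]
    exact Finset.sum_nonneg fun ω _ => mul_nonneg (hμ0 ω) (abs_nonneg _)
  have hbdd : BddBelow (Set.range Φ) := ⟨0, by rintro x ⟨θ, rfl⟩; exact hΦ0 θ⟩
  have hmle : ∀ θ, m ≤ Φ θ := fun θ => ciInf_le hbdd θ
  have hm0 : 0 ≤ m := le_ciInf hΦ0
  have hε : 0 ≤ ε :=
    le_trans (Finset.sum_nonneg fun ω _ => mul_nonneg (hμ0 ω) (sq_nonneg _)) hcal
  have hs0 : 0 ≤ s := Real.sqrt_nonneg ε
  set P : Ω → ℝ := fun ω => ∑ j, α j * (if V (θs j) ω then (1:ℝ) else 0) with hP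
  -- L1 bound via Cauchy-Schwarz
  have hL1 : ∑ ω, μ ω * |P ω - pstar ω| ≤ s := by
    have hcs := Finset.sum_mul_sq_le_sq_mul_sq Finset.univ
      (fun ω => Real.sqrt (μ ω)) (fun ω => Real.sqrt (μ ω) * |P ω - pstar ω|)
    have e1 : ∀ ω : Ω, Real.sqrt (μ ω) * (Real.sqrt (μ ω) * |P ω - pstar ω|)
        = μ ω * |P ω - pstar ω| := by
      intro ω; rw [← mul_assoc, Real.mul_self_sqrt (hμ0 ω)]
    have e2 : ∀ ω : Ω, Real.sqrt (μ ω) ^ 2 = μ ω := fun ω => Real.sq_sqrt (hμ0 ω)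
    have e3 : ∀ ω : Ω, (Real.sqrt (μ ω) * |P ω - pstar ω|) ^ 2
        = μ ω * (P ω - pstar ω) ^ 2 := by
      intro ω; rw [mul_pow, Real.sq_sqrt (hμ0 ω), sq_abs]
    rw [Finset.sum_congr rfl (fun ω _ => e1 ω), Finset.sum_congr rfl (fun ω _ => e2 ω)] at hcs
    have hcs2 : (∑ ω, μ ω * |P ω - pstar ω|) ^ 2 ≤ ε := by
      calc (∑ ω, μ ω * |P ω - pstar ω|) ^ 2
          ≤ (∑ ω, μ ω) * ∑ ω, (Real.sqrt (μ ω) * |P ω - pstar ω|) ^ 2 := hcs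
        _ = ∑ ω, μ ω * (P ω - pstar ω) ^ 2 := by
            rw [hμ1, one_mul]; exact Finset.sum_congr rfl (fun ω _ => e3 ω)
        _ ≤ ε := hcal
    have hnn : 0 ≤ ∑ ω, μ ω * |P ω - pstar ω| :=
      Finset.sum_nonneg fun ω _ => mul_nonneg (hμ0 ω) (abs_nonneg _)
    exact (Real.le_sqrt hnn hε).mpr hcs2
  -- pointwise identity
  have key : ∀ ω, ∑ j, α j * |(if V (θs j) ω then (1:ℝ) else 0) - pstar ω|
      = P ω * (1 - pstar ω) + (1 - P ω) * pstar ω := by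
    intro ω
    have e : ∀ j : Fin k, α j * |(if V (θs j) ω then (1:ℝ) else 0) - pstar ω|
        = α j * (if V (θs j) ω then (1:ℝ) else 0) * (1 - pstar ω)
          + (α j - α j * (if V (θs j) ω then (1:ℝ) else 0)) * pstar ω := by
      intro j
      by_cases h : V (θs j) ω
      · rw [if_pos h, abs_of_nonneg (by linarith [hp1 ω])]; ring
      · rw [if_neg h, abs_of_nonpos (by linarith [hp0 ω]), neg_sub]; ring
    rw [Finset.sum_congr rfl (fun j _ => e j), Finset.sum_add_distrib,
      ← Finset.sum_mul, ← Finset.sum_mul, Finset.sum_sub_distrib, hα1]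
  -- average disagreement bound
  have havg : ∑ j, α j * Φ (θs j) ≤ 2 * m + s := by
    have hswap : ∑ j, α j * Φ (θs j)
        = ∑ ω, μ ω * ∑ j, α j * |(if V (θs j) ω then (1:ℝ) else 0) - pstar ω| := by
      simp only [hΦ, Finset.mul_sum]
      rw [Finset.sum_comm]
      apply Finset.sum_congr rfl; intro ω _
      apply Finset.sum_congr rfl; intro j _; ring
    have hpt : ∀ ω : Ω, ∑ j, α j * |(if V (θs j) ω then (1:ℝ) else 0) - pstar ω|
        ≤ 2 * (pstar ω * (1 - pstar ω)) + |P ω - pstar ω| := by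
      intro ω; rw [key ω]
      have h2 : P ω - pstar ω ≤ |P ω - pstar ω| := le_abs_self _
      have h3 : -|P ω - pstar ω| ≤ P ω - pstar ω := neg_abs_le _
      nlinarith [mul_nonneg (sub_nonneg.mpr h2) (sub_nonneg.mpr (hp1 ω)),
        mul_nonneg (by linarith : (0:ℝ) ≤ |P ω - pstar ω| + (P ω - pstar ω)) (hp0 ω)]
    have hmin : ∑ ω, μ ω * (pstar ω * (1 - pstar ω)) ≤ m := by
      apply le_ciInf; intro θ
      rw [hΦ]
      apply Finset.sum_le_sum; intro ω _
      apply mul_le_mul_of_nonneg_left _ (hμ0 ω)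
      by_cases h : V θ ω
      · rw [if_pos h, abs_of_nonneg (by linarith [hp1 ω])]
        nlinarith [hp0 ω, hp1 ω]
      · rw [if_neg h, abs_of_nonpos (by linarith [hp0 ω]), neg_sub, sub_zero]
        nlinarith [hp0 ω, hp1 ω]
    calc ∑ j, α j * Φ (θs j)
        = ∑ ω, μ ω * ∑ j, α j * |(if V (θs j) ω then (1:ℝ) else 0) - pstar ω| := hswap
      _ ≤ ∑ ω, μ ω * (2 * (pstar ω * (1 - pstar ω)) + |P ω - pstar ω|) :=
          Finset.sum_le_sum fun ω _ => mul_le_mul_of_nonneg_left (hpt ω) (hμ0 ω)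
      _ = 2 * (∑ ω, μ ω * (pstar ω * (1 - pstar ω))) + ∑ ω, μ ω * |P ω - pstar ω| := by
          rw [Finset.mul_sum, ← Finset.sum_add_distrib]
          exact Finset.sum_congr rfl fun ω _ => by ring
      _ ≤ 2 * m + s := by linarith [hL1, hmin]
  -- Markov argument
  set F := univ.filter
      (fun j : Fin k => Φ (θs j) > β * m + (β + 1) * s) with hF
  set W := ∑ j ∈ F, α j with hW
  have hW0 : 0 ≤ W := Finset.sum_nonneg fun j _ => hα0 j
  have hcompl : ∑ j ∈ univ.filter (fun j : Fin k => ¬ (Φ (θs j) > β * m + (β + 1) * s)), α j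
      = 1 - W := by
    have := Finset.sum_filter_add_sum_filter_not Finset.univ
      (fun j : Fin k => Φ (θs j) > β * m + (β + 1) * s) α
    rw [hα1] at this; linarith [this]
  have hlow : (β * m + (β + 1) * s) * W + m * (1 - W) ≤ 2 * m + s := by
    have hsplit := Finset.sum_filter_add_sum_filter_not Finset.univ
      (fun j : Fin k => Φ (θs j) > β * m + (β + 1) * s) (fun j => α j * Φ (θs j))
    have h1 : (β * m + (β + 1) * s) * W ≤ ∑ j ∈ F, α j * Φ (θs j) := by
      rw [hW, Finset.mul_sum]
      apply Finset.sum_le_sum; intro j hj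
      rw [Finset.mem_filter] at hj
      rw [mul_comm]
      exact mul_le_mul_of_nonneg_left (le_of_lt hj.2) (hα0 j)
    have h2 : m * (1 - W) ≤ ∑ j ∈ univ.filter
        (fun j : Fin k => ¬ (Φ (θs j) > β * m + (β + 1) * s)), α j * Φ (θs j) := by
      rw [← hcompl, Finset.mul_sum]
      apply Finset.sum_le_sum; intro j hj
      rw [mul_comm]
      exact mul_le_mul_of_nonneg_left (hmle (θs j)) (hα0 j)
    have := hsplit
    linarith [havg, h1, h2, this.le, this.ge]
  have hβ1 : (0:ℝ) < β - 1 := by linarith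
  rcases eq_or_lt_of_le (by positivity : (0:ℝ) ≤ m + s) with hms | hms
  · -- m + s = 0
    have hm' : m = 0 := by linarith [hm0, hs0, hms.symm.le, hms.symm.ge]
    have hs' : s = 0 := by linarith [hm0, hs0, hms.symm.le, hms.symm.ge]
    have hzero : ∀ j ∈ F, α j = 0 := by
      intro j hj
      rw [Finset.mem_filter] at hj
      have hjpos : 0 < Φ (θs j) := by
        have := hj.2; rw [hm', hs'] at this; simpa using (by linarith : (0:ℝ) < Φ (θs j))
      by_contra hne
      have hapos : 0 < α j := lt_of_le_of_ne (hα0 j) (Ne.symm hne)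
      have hterm : 0 < α j * Φ (θs j) := mul_pos hapos hjpos
      have hsum0 : ∑ j, α j * Φ (θs j) ≤ 0 := by
        rw [hm', hs'] at havg; linarith
      have : α j * Φ (θs j) ≤ ∑ i, α i * Φ (θs i) :=
        Finset.single_le_sum (fun i _ => mul_nonneg (hα0 i) (hΦ0 (θs i)))
          (Finset.mem_univ j)
      linarith
    rw [hW, Finset.sum_eq_zero hzero]
    positivity
  · -- m + s > 0
    have hkey : W * ((β - 1) * (m + s)) ≤ m + s := by
      nlinarith [hlow, hW0, mul_nonneg hW0 hs0]
    have : W * (β - 1) ≤ 1 := by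
      have hpos : 0 < (β - 1) * (m + s) := mul_pos hβ1 hms
      nlinarith [hkey]
    rw [le_div_iff₀ hβ1]
    linarith [this]
end

section
/- Let F be a family of functions into {0,1} with VC dimension d, and let F₁ = {z ↦ Σ_{j=1}^k α_j f_j(z) : f_j ∈ F, α ∈ ℝ^k}. Then the pseudo-dimension of F₁ is at most 4(d+1)k·log₂(2(d+1)k). -/
open Finset

/-! ### Auxiliary lemmas -/

lemma no_linear_shatter {n k : ℕ} (hnk : k < n) (M : Fin n → Fin k → ℝ) (t : Fin n → ℝ) :
    ¬ ∀ b : Fin n → Bool, ∃ α : Fin k → ℝ,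
      ∀ i, (t i ≤ ∑ j, α j * M i j ↔ b i = true) := by
  intro H
  set T : (Fin n → ℝ) →ₗ[ℝ] (Fin k → ℝ) :=
    { toFun := fun u => fun j => ∑ i, u i * M i j
      map_add' := by
        intro u v; funext j; simp [add_mul, Finset.sum_add_distrib]
      map_smul' := by
        intro c u; funext j; simp [Finset.mul_sum, mul_assoc] }
  have hTninj : ¬ Function.Injective T := by
    intro hinj
    have := LinearMap.finrank_le_finrank_of_injective hinj
    simp [Module.finrank_pi] at this
    omega
  rw [Function.not_injective_iff] at hTninj
  obtain ⟨x, y, hxy, hne⟩ := hTninj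
  set u : Fin n → ℝ := x - y with hu
  have hu0 : u ≠ 0 := sub_ne_zero_of_ne hne
  have hTu : ∀ j, ∑ i, u i * M i j = 0 := by
    intro j
    have : T u = 0 := by rw [hu, map_sub, hxy, sub_self]
    have := congrFun this j
    simpa [T] using this
  have horth : ∀ α : Fin k → ℝ, ∑ i, u i * (∑ j, α j * M i j) = 0 := by
    intro α
    have : ∑ i, u i * (∑ j, α j * M i j) = ∑ j, α j * (∑ i, u i * M i j) := by
      simp_rw [Finset.mul_sum]
      rw [Finset.sum_comm]
      congr 1; funext j; congr 1; funext i; ring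
    rw [this]
    simp [hTu]
  obtain ⟨α₁, hα₁⟩ := H (fun i => decide (0 < u i))
  obtain ⟨α₂, hα₂⟩ := H (fun i => decide (u i < 0))
  set w₁ : Fin n → ℝ := fun i => ∑ j, α₁ j * M i j
  set w₂ : Fin n → ℝ := fun i => ∑ j, α₂ j * M i j
  have h₁ : ∀ i, u i * t i ≤ u i * w₁ i := by
    intro i
    rcases lt_or_ge 0 (u i) with hpos | hnonpos
    · have : t i ≤ w₁ i := (hα₁ i).2 (by simp [hpos])
      exact mul_le_mul_of_nonneg_left this hpos.le
    · have : ¬ t i ≤ w₁ i := by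
        intro hle
        have := (hα₁ i).1 hle
        simp at this
        exact absurd this (not_lt.2 hnonpos)
      push_neg at this
      exact mul_le_mul_of_nonpos_left this.le hnonpos
  have h₁s : ∀ i, u i < 0 → u i * t i < u i * w₁ i := by
    intro i hneg
    have : ¬ t i ≤ w₁ i := by
      intro hle
      have := (hα₁ i).1 hle
      simp at this
      exact absurd this (not_lt.2 hneg.le)
    push_neg at this
    exact mul_lt_mul_of_neg_left this hneg
  have h₂ : ∀ i, u i * w₂ i ≤ u i * t i := by
    intro i
    rcases lt_or_ge (u i) 0 with hneg | hnonneg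
    · have : t i ≤ w₂ i := (hα₂ i).2 (by simp [hneg])
      exact mul_le_mul_of_nonpos_left this hneg.le
    · have : ¬ t i ≤ w₂ i := by
        intro hle
        have := (hα₂ i).1 hle
        simp at this
        exact absurd this (not_lt.2 hnonneg)
      push_neg at this
      exact mul_le_mul_of_nonneg_left this.le hnonneg
  have h₂s : ∀ i, 0 < u i → u i * w₂ i < u i * t i := by
    intro i hpos
    have : ¬ t i ≤ w₂ i := by
      intro hle
      have := (hα₂ i).1 hle
      simp at this
      exact absurd this (not_lt.2 hpos.le)
    push_neg at this
    exact mul_lt_mul_of_pos_left this hpos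
  obtain ⟨i₀, hi₀⟩ : ∃ i, u i ≠ 0 := by
    by_contra hc
    push_neg at hc
    exact hu0 (funext hc)
  have hsum₁ : ∑ i, u i * t i ≤ 0 := by
    calc ∑ i, u i * t i ≤ ∑ i, u i * w₁ i := Finset.sum_le_sum (fun i _ => h₁ i)
    _ = 0 := horth α₁
  have hsum₂ : 0 ≤ ∑ i, u i * t i := by
    calc (0:ℝ) = ∑ i, u i * w₂ i := (horth α₂).symm
    _ ≤ ∑ i, u i * t i := Finset.sum_le_sum (fun i _ => h₂ i)
  rcases hi₀.lt_or_gt with hneg | hpos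
  · have : ∑ i, u i * t i < 0 := by
      calc ∑ i, u i * t i < ∑ i, u i * w₁ i :=
        Finset.sum_lt_sum (fun i _ => h₁ i) ⟨i₀, Finset.mem_univ _, h₁s i₀ hneg⟩
      _ = 0 := horth α₁
    linarith
  · have : 0 < ∑ i, u i * t i := by
      calc (0:ℝ) = ∑ i, u i * w₂ i := (horth α₂).symm
      _ < ∑ i, u i * t i :=
        Finset.sum_lt_sum (fun i _ => h₂ i) ⟨i₀, Finset.mem_univ _, h₂s i₀ hpos⟩
    linarith

lemma Iic_eq_range_succ (c : ℕ) : Finset.Iic c = Finset.range (c+1) := by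
  ext x; simp [Nat.lt_succ_iff]

lemma sum_choose_le (m c : ℕ) : ∑ j ∈ Iic c, m.choose j ≤ (m+1)^c := by
  rw [Iic_eq_range_succ]
  induction c with
  | zero => simp
  | succ c ih =>
    rw [Finset.sum_range_succ]
    have h1 : m.choose (c+1) ≤ m^(c+1) := Nat.choose_le_pow m (c+1)
    have h2 : m^(c+1) ≤ m * (m+1)^c := by
      rw [pow_succ']
      exact Nat.mul_le_mul_left m (Nat.pow_le_pow_left (Nat.le_succ m) c)
    calc ∑ j ∈ range (c+1), m.choose j + m.choose (c+1) ≤ (m+1)^c + m * (m+1)^c :=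
          Nat.add_le_add ih (h1.trans h2)
    _ = (m+1)^(c+1) := by ring

lemma card_le_of_shatter_bound {m : ℕ} (B : Finset (Finset (Fin m))) (c : ℕ)
    (hB : ∀ s, B.Shatters s → s.card ≤ c) : B.card ≤ (m+1)^c := by
  have hvc : B.vcDim ≤ c := by
    apply Finset.sup_le
    intro s hs
    exact hB s (Finset.mem_shatterer.1 hs)
  calc B.card ≤ B.shatterer.card := Finset.card_le_card_shatterer B
  _ ≤ ∑ j ∈ Iic B.vcDim, (Fintype.card (Fin m)).choose j := Finset.card_shatterer_le_sum_vcDim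
  _ ≤ ∑ j ∈ Iic c, (Fintype.card (Fin m)).choose j := by
      apply Finset.sum_le_sum_of_subset
      exact Finset.Iic_subset_Iic.2 hvc
  _ ≤ (m+1)^c := by rw [Fintype.card_fin]; exact sum_choose_le m c

lemma arith_bound {D m : ℕ} (hD : 2 ≤ D) (hm : 2^m ≤ (m+1)^D) :
    (m:ℝ) ≤ 4*D*Real.logb 2 (2*D) := by
  have hD1 : (1:ℝ) ≤ D := by exact_mod_cast Nat.one_le_of_lt hD
  have hD2 : (2:ℝ) ≤ D := by exact_mod_cast hD
  have hDpos : (0:ℝ) < D := by linarith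
  rcases Nat.eq_zero_or_pos m with hm0 | hm1
  · rw [hm0]
    push_cast
    apply mul_nonneg (by positivity)
    exact Real.logb_nonneg one_lt_two (by linarith)
  have hm1R : (1:ℝ) ≤ m := by exact_mod_cast hm1
  have hmpos : (0:ℝ) < m := by linarith
  have key : (m:ℝ) ≤ D * Real.logb 2 (m+1) := by
    have hmR : (2:ℝ)^m ≤ ((m:ℝ)+1)^D := by exact_mod_cast hm
    have h1 : Real.logb 2 ((2:ℝ)^m) ≤ Real.logb 2 (((m:ℝ)+1)^D) :=
      Real.logb_le_logb_of_le one_lt_two (by positivity) hmR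
    rwa [Real.logb_pow, Real.logb_pow, Real.logb_self_eq_one one_lt_two,
      mul_one] at h1
  have hlog1 : Real.logb 2 ((m:ℝ)+1) ≤ 1 + Real.logb 2 m := by
    have h2 : Real.logb 2 ((m:ℝ)+1) ≤ Real.logb 2 (2*m) :=
      Real.logb_le_logb_of_le one_lt_two (by linarith) (by linarith)
    rwa [Real.logb_mul (by norm_num) (by positivity),
      Real.logb_self_eq_one one_lt_two] at h2
  set s : ℝ := Real.sqrt m with hs
  have hspos : 0 < s := Real.sqrt_pos.2 hmpos
  have hs1 : 1 ≤ s := Real.one_le_sqrt.2 hm1R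
  have hss : s * s = m := Real.mul_self_sqrt hmpos.le
  have hlogm : Real.logb 2 (m:ℝ) ≤ 3 * s := by
    have hlm : Real.log (m:ℝ) ≤ 2 * s := by
      have : Real.log (m:ℝ) = Real.log s + Real.log s := by
        rw [← Real.log_mul hspos.ne' hspos.ne', hss]
      rw [this]
      have := Real.log_le_sub_one_of_pos hspos
      linarith
    have hl2 : (0.6931471803:ℝ) < Real.log 2 := Real.log_two_gt_d9
    rw [Real.logb, div_le_iff₀ (by linarith)]
    nlinarith
  have hm16 : (m:ℝ) ≤ 16 * D^2 := by
    have h4 : (m:ℝ) ≤ 4*D*s := by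
      have : (m:ℝ) ≤ D * (1 + (1 + 3*s)) := by
        calc (m:ℝ) ≤ D * Real.logb 2 (m+1) := key
        _ ≤ D * (1 + (1 + 3*s)) := by
            apply mul_le_mul_of_nonneg_left _ hDpos.le
            calc Real.logb 2 ((m:ℝ)+1) ≤ 1 + Real.logb 2 m := hlog1
            _ ≤ 1 + (1 + 3*s) := by nlinarith
      nlinarith
    have hsle : s ≤ 4*D := by nlinarith
    nlinarith
  have hfin : (m:ℝ) ≤ D * (5 + 2 * Real.logb 2 D) := by
    calc (m:ℝ) ≤ D * Real.logb 2 (m+1) := key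
    _ ≤ D * Real.logb 2 (32*D^2) := by
        apply mul_le_mul_of_nonneg_left _ hDpos.le
        apply Real.logb_le_logb_of_le one_lt_two (by linarith)
        nlinarith
    _ = D * (5 + 2 * Real.logb 2 D) := by
        congr 1
        rw [Real.logb_mul (by norm_num) (by positivity), Real.logb_pow,
          show (32:ℝ) = 2^(5:ℕ) by norm_num, Real.logb_pow,
          Real.logb_self_eq_one one_lt_two]
        push_cast
        ring
  have hlD : 1 ≤ Real.logb 2 (D:ℝ) := by
    have := Real.logb_le_logb_of_le one_lt_two (by norm_num : (0:ℝ) < 2) hD2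
    rwa [Real.logb_self_eq_one one_lt_two] at this
  have htgt : Real.logb 2 (2*(D:ℝ)) = 1 + Real.logb 2 D := by
    rw [Real.logb_mul (by norm_num) (by positivity),
      Real.logb_self_eq_one one_lt_two]
  rw [htgt]
  nlinarith

/-- From a shattered set of a family of finsets, extract, for every boolean pattern on
its enumeration, a member realizing that pattern. -/
lemma shatters_pattern {m : ℕ} {𝒜 : Finset (Finset (Fin m))} {s : Finset (Fin m)}
    (hs : 𝒜.Shatters s) {n : ℕ} (hn : s.card = n) (b : Fin n → Bool) :
    ∃ u ∈ 𝒜, ∀ i : Fin n, ((s.orderIsoOfFin hn i : Fin m) ∈ u ↔ b i = true) := by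
  classical
  set e := s.orderIsoOfFin hn with he
  set tset : Finset (Fin m) :=
    (Finset.univ.filter (fun i : Fin n => b i = true)).image (fun i => (e i : Fin m)) with ht
  have htsub : tset ⊆ s := by
    intro x hx
    simp only [ht, Finset.mem_image, Finset.mem_filter] at hx
    obtain ⟨i, _, rfl⟩ := hx
    exact (e i).2
  obtain ⟨u, hu, hsu⟩ := hs htsub
  refine ⟨u, hu, fun i => ?_⟩
  constructor
  · intro hiu
    have hmem : (e i : Fin m) ∈ s ∩ u := Finset.mem_inter.2 ⟨(e i).2, hiu⟩
    rw [hsu] at hmem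
    simp only [ht, Finset.mem_image, Finset.mem_filter, Finset.mem_univ, true_and] at hmem
    obtain ⟨i', hb', he'⟩ := hmem
    have : i' = i := e.injective (Subtype.ext he')
    rwa [this] at hb'
  · intro hb
    have : (e i : Fin m) ∈ tset := by
      simp only [ht, Finset.mem_image, Finset.mem_filter, Finset.mem_univ, true_and]
      exact ⟨i, hb, rfl⟩
    rw [← hsu] at this
    exact (Finset.mem_inter.1 this).2

lemma nat_add_two_le_two_pow {m : ℕ} (hm : 2 ≤ m) : m + 2 ≤ 2^m := by
  induction m, hm using Nat.le_induction with
  | base => norm_num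
  | succ m hm ih =>
    have : 2^(m+1) = 2 * 2^m := by ring
    omega

/-- `F` (boolean-valued) shatters the points `z i` if every pattern is realized. -/
def BShatters {Z : Type*} (F : Set (Z → Bool)) {m : ℕ} (z : Fin m → Z) : Prop :=
  ∀ b : Fin m → Bool, ∃ f ∈ F, ∀ i, f (z i) = b i

/-- `F` pseudo-shatters the `m` points `(z i, t i)`. -/
def PseudoShatters {Z : Type*} (F : Set (Z → ℝ)) {m : ℕ}
    (z : Fin m → Z) (t : Fin m → ℝ) : Prop :=
  ∀ b : Fin m → Bool, ∃ f ∈ F, ∀ i, (t i ≤ f (z i) ↔ b i = true)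

/-- If `F` is a `{0,1}`-valued class of VC dimension at most `d`, then the class
`F₁` of `k`-term linear combinations of members of `F` has pseudo-dimension at
most `4(d+1)k·log₂(2(d+1)k)`. -/
theorem stmt_14 {Z : Type*} (F : Set (Z → Bool)) (d k : ℕ)
    (hF : ∀ (m : ℕ) (z : Fin m → Z), BShatters F z → m ≤ d)
    (m : ℕ) (z : Fin m → Z) (t : Fin m → ℝ)
    (h : PseudoShatters
      {g | ∃ (f : Fin k → Z → Bool) (α : Fin k → ℝ), (∀ j, f j ∈ F) ∧
        g = fun x => ∑ j, α j * (if f j x then (1 : ℝ) else 0)} z t) :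
    (m : ℝ) ≤ 4 * (d + 1) * k * Real.logb 2 (2 * (d + 1) * k) := by
  classical
  -- trivial case k = 0
  rcases Nat.eq_zero_or_pos k with hk | hk
  · subst hk
    have hm0 : m = 0 := by
      by_contra hm
      have hm1 : 0 < m := Nat.pos_of_ne_zero hm
      obtain ⟨g, ⟨f, α, hfF, hg⟩, hgt⟩ := h (fun _ => true)
      obtain ⟨g', ⟨f', α', hfF', hg'⟩, hgf⟩ := h (fun _ => false)
      have h1 : t ⟨0, hm1⟩ ≤ g (z ⟨0, hm1⟩) := (hgt ⟨0, hm1⟩).2 rfl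
      have h2 : ¬ t ⟨0, hm1⟩ ≤ g' (z ⟨0, hm1⟩) := by
        intro hle
        exact Bool.false_ne_true ((hgf ⟨0, hm1⟩).1 hle)
      subst hg hg'
      simp only at h1 h2
      rw [Finset.univ_eq_empty, Finset.sum_empty] at h1 h2
      exact h2 h1
    subst hm0
    simp
  -- main case
  -- the family of restrictions of F to the sample
  set A : Finset (Finset (Fin m)) :=
    (Set.toFinite {s : Finset (Fin m) | ∃ f ∈ F, ∀ i, (i ∈ s ↔ f (z i) = true)}).toFinset
    with hA
  have hAmem : ∀ s, s ∈ A ↔ ∃ f ∈ F, ∀ i, (i ∈ s ↔ f (z i) = true) := by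
    intro s; rw [hA, Set.Finite.mem_toFinset]; rfl
  have hAshat : ∀ s, A.Shatters s → s.card ≤ d := by
    intro s hs
    apply hF s.card (fun i => z (s.orderIsoOfFin rfl i))
    intro b
    obtain ⟨u, hu, hub⟩ := shatters_pattern hs rfl b
    obtain ⟨f, hfF, hfu⟩ := (hAmem u).1 hu
    refine ⟨f, hfF, fun i => ?_⟩
    rw [Bool.eq_iff_iff]
    rw [← hfu, hub]
  have hAcard : A.card ≤ (m+1)^d := card_le_of_shatter_bound A d hAshat
  -- families of patterns realized for a fixed boolean matrix
  set BM : (Fin k → Finset (Fin m)) → Finset (Finset (Fin m)) := fun M =>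
    (Set.toFinite {s : Finset (Fin m) | ∃ α : Fin k → ℝ,
      ∀ i, (t i ≤ ∑ j, α j * (if i ∈ M j then (1:ℝ) else 0) ↔ i ∈ s)}).toFinset
    with hBM
  have hBMmem : ∀ M s, s ∈ BM M ↔ ∃ α : Fin k → ℝ,
      ∀ i, (t i ≤ ∑ j, α j * (if i ∈ M j then (1:ℝ) else 0) ↔ i ∈ s) := by
    intro M s; rw [hBM]; rw [Set.Finite.mem_toFinset]; rfl
  have hBMshat : ∀ M s, (BM M).Shatters s → s.card ≤ k := by
    intro M s hs
    by_contra hc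
    push_neg at hc
    apply no_linear_shatter hc
      (fun i j => if (s.orderIsoOfFin rfl i : Fin m) ∈ M j then (1:ℝ) else 0)
      (fun i => t (s.orderIsoOfFin rfl i))
    intro b
    obtain ⟨u, hu, hub⟩ := shatters_pattern hs rfl b
    obtain ⟨α, hα⟩ := (hBMmem M u).1 hu
    refine ⟨α, fun i => ?_⟩
    rw [hα (s.orderIsoOfFin rfl i), hub]
  have hBMcard : ∀ M, (BM M).card ≤ (m+1)^k :=
    fun M => card_le_of_shatter_bound (BM M) k (hBMshat M)
  -- every pattern is realized
  have hcover : (Finset.univ : Finset (Finset (Fin m))) ⊆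
      (Fintype.piFinset (fun _ : Fin k => A)).biUnion BM := by
    intro s _
    obtain ⟨g, ⟨f, α, hfF, hg⟩, hgs⟩ := h (fun i => decide (i ∈ s))
    set M : Fin k → Finset (Fin m) :=
      fun j => Finset.univ.filter (fun i => f j (z i) = true) with hM
    have hMA : M ∈ Fintype.piFinset (fun _ : Fin k => A) := by
      rw [Fintype.mem_piFinset]
      intro j
      rw [hAmem]
      exact ⟨f j, hfF j, fun i => by simp [hM]⟩
    refine Finset.mem_biUnion.2 ⟨M, hMA, ?_⟩
    rw [hBMmem]
    refine ⟨α, fun i => ?_⟩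
    have hMi : ∀ j, (if i ∈ M j then (1:ℝ) else 0) = (if f j (z i) then (1:ℝ) else 0) := by
      intro j
      simp [hM]
    have hgi : g (z i) = ∑ j, α j * (if i ∈ M j then (1:ℝ) else 0) := by
      rw [hg]
      exact Finset.sum_congr rfl (fun j _ => by rw [hMi j])
    rw [← hgi]
    rw [hgs i]
    simp
  -- counting
  have hcount : 2^m ≤ (m+1)^((d+1)*k) := by
    have h1 : (Finset.univ : Finset (Finset (Fin m))).card = 2^m := by
      rw [Finset.card_univ, Fintype.card_finset, Fintype.card_fin]
    have h2 : ((Fintype.piFinset (fun _ : Fin k => A)).biUnion BM).card ≤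
        ((m+1)^d)^k * (m+1)^k := by
      calc ((Fintype.piFinset (fun _ : Fin k => A)).biUnion BM).card
          ≤ ∑ M ∈ Fintype.piFinset (fun _ : Fin k => A), (BM M).card :=
            Finset.card_biUnion_le
        _ ≤ ∑ _M ∈ Fintype.piFinset (fun _ : Fin k => A), (m+1)^k :=
            Finset.sum_le_sum (fun M _ => hBMcard M)
        _ = (Fintype.piFinset (fun _ : Fin k => A)).card * (m+1)^k := by
            rw [Finset.sum_const, smul_eq_mul]
        _ ≤ ((m+1)^d)^k * (m+1)^k := by
            apply Nat.mul_le_mul_right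
            rw [Fintype.card_piFinset]
            calc ∏ _j : Fin k, A.card ≤ ∏ _j : Fin k, (m+1)^d :=
                  Finset.prod_le_prod' (fun j _ => hAcard)
              _ = ((m+1)^d)^k := by rw [Finset.prod_const, Finset.card_univ, Fintype.card_fin]
    calc 2^m = (Finset.univ : Finset (Finset (Fin m))).card := h1.symm
      _ ≤ ((Fintype.piFinset (fun _ : Fin k => A)).biUnion BM).card :=
          Finset.card_le_card hcover
      _ ≤ ((m+1)^d)^k * (m+1)^k := h2
      _ = (m+1)^((d+1)*k) := by rw [← pow_mul, ← pow_add]; ring_nf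
  -- conclude
  have hcast : (4:ℝ) * (d + 1) * k * Real.logb 2 (2 * (d + 1) * k)
      = 4 * ((d+1)*k : ℕ) * Real.logb 2 (2 * ((d+1)*k : ℕ)) := by
    push_cast
    ring_nf
  rw [hcast]
  rcases Nat.lt_or_ge ((d+1)*k) 2 with hD | hD
  · -- (d+1)*k = 1, i.e. d = 0, k = 1
    have hD1 : (d+1)*k = 1 := by
      have : 1 ≤ (d+1)*k := Nat.one_le_iff_ne_zero.2 (by positivity)
      omega
    have hm1 : m ≤ 1 := by
      by_contra hm
      push_neg at hm
      have := nat_add_two_le_two_pow hm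
      rw [hD1, pow_one] at hcount
      omega
    rw [hD1]
    have h2' : Real.logb 2 (2 * ((1:ℕ):ℝ)) = 1 := by
      push_cast
      rw [mul_one]
      exact Real.logb_self_eq_one one_lt_two
    rw [h2']
    have hmle : (m:ℝ) ≤ 1 := by exact_mod_cast hm1
    push_cast
    linarith
  · exact arith_bound hD hcount
end
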